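/- Let c¹, c² ∈ ℕ₊ⁿ define a BUCO instance and let (H, c1, c2) be the associated MSp instance. If x ∈ {0,1}ⁿ is a Pareto-optimal solution of the BUCO instance, then S_x is a Pareto-optimal solution of the MSp instance; that is, there is no spanner S of H whose value vector f(S) dominates f(S_x). -/

import Mathlib

/-!
Let `S` be a spanner whose value vector dominates `f(S_x)`, and read a BUCO solution `x'` off it:
`x'_i = 1` iff `{v_i', w_i} ∉ S`. Since `M` exceeds the cost of `S_x`, `S` avoids `{s, t}`, so
every `s`–`t` path in `S` crosses all gadgets; a potential argument bounds `d^S(s, t)`, and with it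
the stretch of `S`, below by `3n - 1 + c²ᵀx'`, while the cost of `S` is at least
`∑_{x'_i = 0} c¹_i`. Replacing every edge of `H` by a short walk in `S_x` shows that `S_x` has
stretch at most `3n - 1 + c²ᵀx`, and its cost is `∑_{x_i = 0} c¹_i`. These bounds are
`(-c¹ᵀx', c²ᵀx')` and `(-c¹ᵀx, c²ᵀx)` shifted by a common constant, so `x'` dominates `x`.
For `n = 1`, where `H` has no edge `{s, t}`, the pair `(v₁', w₁)` takes its place and the two
possible bound vectors are incomparable.
-/

namespace MSpPaper

open SimpleGraph

variable {V : Type*}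

/-- Minimum total `c2`-weight of a walk from `u` to `v` using only edges in `F`
(the set of weights of such walks is a set of naturals; its infimum is `0` when no walk exists). -/
noncomputable def wdist (F : Set (Sym2 V)) (c2 : Sym2 V → ℕ) (u v : V) : ℕ :=
  sInf (Set.range fun p : (SimpleGraph.fromEdgeSet F).Walk u v => (p.edges.map c2).sum)

/-- `S` is a spanner of `G`: a subset of the edges such that the resulting subgraph is connected. -/
def IsSpanner (G : SimpleGraph V) (S : Set (Sym2 V)) : Prop :=
  S ⊆ G.edgeSet ∧ (SimpleGraph.fromEdgeSet S).Connected

/-- First objective: total `c1`-cost of the spanner. -/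
def f1 (c1 : Sym2 V → ℤ) (S : Finset (Sym2 V)) : ℤ := ∑ e ∈ S, c1 e

open scoped Classical in
/-- Second objective (stretch factor): maximum over pairs of distinct vertices of the
distance ratio `d^S(u,v)/d^E(u,v)` (junk value `0` if there is no pair of distinct vertices). -/
noncomputable def f2 [Fintype V] (E S : Set (Sym2 V)) (c2 : Sym2 V → ℕ) : ℚ :=
  if h : ((Finset.univ : Finset (V × V)).filter fun p => p.1 ≠ p.2).Nonempty then
    ((Finset.univ : Finset (V × V)).filter fun p => p.1 ≠ p.2).sup' h
      (fun p => (wdist S c2 p.1 p.2 : ℚ) / (wdist E c2 p.1 p.2 : ℚ))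
  else 0

/-- The value vector of a spanner. -/
noncomputable def valueVec [Fintype V] (G : SimpleGraph V) (c1 : Sym2 V → ℤ) (c2 : Sym2 V → ℕ)
    (S : Finset (Sym2 V)) : ℚ × ℚ :=
  ((f1 c1 S : ℚ), f2 G.edgeSet (↑S) c2)

/-- `y'` dominates `y`: componentwise `≤` and unequal. -/
def Dominates (y' y : ℚ × ℚ) : Prop := y' ≤ y ∧ y' ≠ y

/-- The non-dominated set of an MSp instance. -/
def YN [Fintype V] (G : SimpleGraph V) (c1 : Sym2 V → ℤ) (c2 : Sym2 V → ℕ) : Set (ℚ × ℚ) :=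
  {y | (∃ S : Finset (Sym2 V), IsSpanner G (↑S) ∧ valueVec G c1 c2 S = y) ∧
       ∀ S' : Finset (Sym2 V), IsSpanner G (↑S') → ¬ Dominates (valueVec G c1 c2 S') y}


/-! ### The MSp instance associated with a BUCO instance (Section 4)

A BUCO instance is given by vectors `a = c¹` and `b = c²` in `ℕ₊ⁿ`; feasible
solutions are `x : Fin n → Bool` (`x i = true` meaning `x_i = 1`). -/

/-- Vertices of the graph `H`: for each `i`, the vertex `(i,0)` is `v_i`, `(i,1)` is `v_i'`,
and `(i,2)` is `w_i`. -/
abbrev Vtx (n : ℕ) := Fin n × Fin 3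

/-- The weights `(c1, c2)` of the (ordered) pair `x y` of vertices of `H`;
`(0, 0)` (in particular `c2 = 0`) marks non-edges.
Here `M = (∑ i, a i) + 1`. -/
def wtB (n : ℕ) (a b : Fin n → ℕ) (x y : Vtx n) : ℤ × ℕ :=
  if x.2 = 0 ∧ y.2 = 2 ∧ x.1 = y.1 then (0, b x.1 + 2)
  else if x.2 = 0 ∧ y.2 = 1 ∧ x.1 = y.1 then (0, 1)
  else if x.2 = 1 ∧ y.2 = 2 ∧ x.1 = y.1 then ((a x.1 : ℤ), 1)
  else if x.2 = 2 ∧ y.2 = 0 ∧ (y.1 : ℕ) = (x.1 : ℕ) + 1 then (0, 1)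
  else if x.2 = 0 ∧ y.2 = 2 ∧ (x.1 : ℕ) = 0 ∧ (y.1 : ℕ) = n - 1 ∧ x.1 ≠ y.1 then
    (((∑ i, a i : ℕ) : ℤ) + 1, 1)
  else (0, 0)

/-- The cost function `c1` of `H`. -/
def c1B (n : ℕ) (a b : Fin n → ℕ) : Sym2 (Vtx n) → ℤ :=
  Sym2.lift ⟨fun x y => (wtB n a b x y).1 + (wtB n a b y x).1, fun _ _ => add_comm _ _⟩

/-- The length function `c2` of `H`. -/
def c2B (n : ℕ) (a b : Fin n → ℕ) : Sym2 (Vtx n) → ℕ :=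
  Sym2.lift ⟨fun x y => (wtB n a b x y).2 + (wtB n a b y x).2, fun _ _ => add_comm _ _⟩

/-- The edge set of `H`: exactly the pairs with positive length. -/
def EB (n : ℕ) (a b : Fin n → ℕ) : Set (Sym2 (Vtx n)) := {e | c2B n a b e ≠ 0}

/-- The graph `H` associated with the BUCO instance `(a, b)`. -/
def HB (n : ℕ) (a b : Fin n → ℕ) : SimpleGraph (Vtx n) :=
  SimpleGraph.fromEdgeSet (EB n a b)

/-- The vertex `v_i`. -/
def vB (n : ℕ) (i : Fin n) : Vtx n := (i, 0)
/-- The vertex `v_i'`. -/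
def pB (n : ℕ) (i : Fin n) : Vtx n := (i, 1)
/-- The vertex `w_i`. -/
def wB (n : ℕ) (i : Fin n) : Vtx n := (i, 2)
/-- The vertex `s = v_1`. -/
def sB (n : ℕ) (hn : 0 < n) : Vtx n := (⟨0, hn⟩, 0)
/-- The vertex `t = w_n`. -/
def tB (n : ℕ) (hn : 0 < n) : Vtx n := (⟨n - 1, Nat.sub_lt hn one_pos⟩, 2)

open scoped Classical in
/-- The spanner `S_x` of `H` associated with a BUCO solution `x`: all edges of zero
`c1`-cost together with the edges `{v_i', w_i}` for every `i` with `x_i = 0`. -/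
noncomputable def Sx (n : ℕ) (a b : Fin n → ℕ) (x : Fin n → Bool) : Finset (Sym2 (Vtx n)) :=
  (Finset.univ.filter fun e => e ∈ (HB n a b).edgeSet ∧ c1B n a b e = 0) ∪
    (Finset.univ.filter fun i : Fin n => x i = false).image fun i => s(pB n i, wB n i)

/-- The value vector `(-c¹ᵀx, c²ᵀx)` of a BUCO solution `x`, as a vector in `ℚ²`. -/
def bucoVal (n : ℕ) (a b : Fin n → ℕ) (x : Fin n → Bool) : ℚ × ℚ :=
  (-(∑ i, if x i then (a i : ℚ) else 0), ∑ i, if x i then (b i : ℚ) else 0)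

section Walks

def walkWeight {G : SimpleGraph V} (c2 : Sym2 V → ℕ) {u v : V} (p : G.Walk u v) : ℕ :=
  (p.edges.map c2).sum

variable {G : SimpleGraph V} (c2 : Sym2 V → ℕ)

@[simp]
lemma walkWeight_nil {u : V} : walkWeight c2 (Walk.nil : G.Walk u u) = 0 := rfl

@[simp]
lemma walkWeight_cons {u v w : V} (h : G.Adj u v) (p : G.Walk v w) :
    walkWeight c2 (Walk.cons h p) = c2 s(u, v) + walkWeight c2 p := by
  simp [walkWeight]

@[simp]
lemma walkWeight_append {u v w : V} (p : G.Walk u v) (q : G.Walk v w) :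
    walkWeight c2 (p.append q) = walkWeight c2 p + walkWeight c2 q := by
  simp [walkWeight]

@[simp]
lemma walkWeight_reverse {u v : V} (p : G.Walk u v) :
    walkWeight c2 p.reverse = walkWeight c2 p := by
  simp [walkWeight]

@[simp]
lemma walkWeight_toWalk {u v : V} (h : G.Adj u v) : walkWeight c2 h.toWalk = c2 s(u, v) := by
  simp [walkWeight]

lemma one_le_walkWeight {u v : V} (hpos : ∀ e ∈ G.edgeSet, c2 e ≠ 0) (huv : u ≠ v)
    (p : G.Walk u v) : 1 ≤ walkWeight c2 p := by
  cases p with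
  | nil => exact absurd rfl huv
  | cons h q =>
    have := hpos _ ((mem_edgeSet G).2 h)
    simp only [walkWeight_cons]
    omega

lemma le_add_walkWeight_of_potential (φ : V → ℕ)
    (hφ : ∀ u v, G.Adj u v → φ v ≤ φ u + c2 s(u, v)) {u v : V} (p : G.Walk u v) :
    φ v ≤ φ u + walkWeight c2 p := by
  induction p with
  | nil => simp
  | cons h q ih =>
    have := hφ _ _ h
    simp only [walkWeight_cons]
    omega

lemma exists_walk_walkWeight_le_mul {G' : SimpleGraph V} (K : ℚ)
    (hrep : ∀ u v, G'.Adj u v → ∃ q : G.Walk u v, (walkWeight c2 q : ℚ) ≤ K * c2 s(u, v))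
    {u v : V} (p : G'.Walk u v) :
    ∃ q : G.Walk u v, (walkWeight c2 q : ℚ) ≤ K * walkWeight c2 p := by
  induction p with
  | nil => exact ⟨Walk.nil, by simp⟩
  | cons h _ ih =>
    obtain ⟨q₁, hq₁⟩ := hrep _ _ h
    obtain ⟨q₂, hq₂⟩ := ih
    refine ⟨q₁.append q₂, ?_⟩
    push_cast [walkWeight_append, walkWeight_cons]
    linarith

end Walks

section Distances

variable (F : Set (Sym2 V)) (c2 : Sym2 V → ℕ)

lemma wdist_le_walkWeight {u v : V} (p : (fromEdgeSet F).Walk u v) :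
    wdist F c2 u v ≤ walkWeight c2 p :=
  Nat.sInf_le ⟨p, rfl⟩

lemma exists_walkWeight_eq_wdist {u v : V} [Nonempty ((fromEdgeSet F).Walk u v)] :
    ∃ p : (fromEdgeSet F).Walk u v, walkWeight c2 p = wdist F c2 u v :=
  Nat.sInf_mem (Set.range_nonempty _)

lemma nonempty_walk_of_wdist_ne_zero {u v : V} (h : wdist F c2 u v ≠ 0) :
    Nonempty ((fromEdgeSet F).Walk u v) := by
  by_contra hempty
  rw [not_nonempty_iff] at hempty
  exact h (by simp [wdist, Set.range_eq_empty])

lemma le_add_wdist_of_potential (φ : V → ℕ) (hφ : ∀ u v, s(u, v) ∈ F → φ v ≤ φ u + c2 s(u, v))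
    {u v : V} [Nonempty ((fromEdgeSet F).Walk u v)] :
    φ v ≤ φ u + wdist F c2 u v := by
  obtain ⟨p, hp⟩ := exists_walkWeight_eq_wdist F c2 (u := u) (v := v)
  rw [← hp]
  exact le_add_walkWeight_of_potential c2 φ (fun u v h => hφ u v ((fromEdgeSet_adj F).1 h).1) p

lemma one_le_wdist (hpos : ∀ e ∈ F, c2 e ≠ 0) {u v : V} (huv : u ≠ v)
    [Nonempty ((fromEdgeSet F).Walk u v)] : 1 ≤ wdist F c2 u v := by
  obtain ⟨p, hp⟩ := exists_walkWeight_eq_wdist F c2 (u := u) (v := v)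
  rw [← hp]
  exact one_le_walkWeight c2 (fun e he => hpos e (edgeSet_fromEdgeSet F ▸ he).1) huv p

lemma wdist_eq_one_of_adj (hpos : ∀ e ∈ F, c2 e ≠ 0) {u v : V} (h : (fromEdgeSet F).Adj u v)
    (h1 : c2 s(u, v) = 1) : wdist F c2 u v = 1 := by
  have : Nonempty ((fromEdgeSet F).Walk u v) := ⟨h.toWalk⟩
  have hle := wdist_le_walkWeight F c2 h.toWalk
  rw [walkWeight_toWalk, h1] at hle
  exact le_antisymm hle (one_le_wdist F c2 hpos h.ne)

end Distances

section Stretch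

variable [Fintype V] (E S : Set (Sym2 V)) (c2 : Sym2 V → ℕ)

lemma wdist_div_wdist_le_f2 {u v : V} (huv : u ≠ v) :
    (wdist S c2 u v : ℚ) / wdist E c2 u v ≤ f2 E S c2 := by
  classical
  have hmem : (u, v) ∈ (Finset.univ : Finset (V × V)).filter fun p => p.1 ≠ p.2 := by
    simp [huv]
  rw [f2, dif_pos ⟨_, hmem⟩]
  exact Finset.le_sup' (fun p : V × V => (wdist S c2 p.1 p.2 : ℚ) / wdist E c2 p.1 p.2) hmem

lemma wdist_le_f2_of_wdist_eq_one {u v : V} (huv : u ≠ v) (h1 : wdist E c2 u v = 1) :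
    (wdist S c2 u v : ℚ) ≤ f2 E S c2 := by
  simpa [h1] using wdist_div_wdist_le_f2 E S c2 huv

lemma f2_le_of_forall_adj (K : ℚ) (hK : 0 ≤ K)
    (hrep : ∀ u v, (fromEdgeSet E).Adj u v →
      ∃ q : (fromEdgeSet S).Walk u v, (walkWeight c2 q : ℚ) ≤ K * c2 s(u, v)) :
    f2 E S c2 ≤ K := by
  classical
  unfold f2
  split_ifs
  · refine Finset.sup'_le _ _ fun ⟨u, v⟩ _ => ?_
    by_cases h0 : wdist E c2 u v = 0
    · simpa [h0] using hK
    have := nonempty_walk_of_wdist_ne_zero E c2 h0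
    obtain ⟨p, hp⟩ := exists_walkWeight_eq_wdist E c2 (u := u) (v := v)
    obtain ⟨q, hq⟩ := exists_walk_walkWeight_le_mul c2 K hrep p
    rw [div_le_iff₀ (by positivity)]
    calc (wdist S c2 u v : ℚ) ≤ walkWeight c2 q := by exact_mod_cast wdist_le_walkWeight S c2 q
      _ ≤ K * wdist E c2 u v := by rwa [← hp]
  · exact hK

end Stretch

section Arcs

variable {n : ℕ} {a b : Fin n → ℕ}

/-- For `n = 1` there is no arc `st`: it would coincide with `vw`. -/
inductive Arc (n : ℕ) : Vtx n → Vtx n → Prop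
  | vw (i : Fin n) : Arc n (vB n i) (wB n i)
  | vp (i : Fin n) : Arc n (vB n i) (pB n i)
  | pw (i : Fin n) : Arc n (pB n i) (wB n i)
  | wv (i j : Fin n) : (j : ℕ) = i + 1 → Arc n (wB n i) (vB n j)
  | st (hn : 0 < n) : 2 ≤ n → Arc n (sB n hn) (tB n hn)

variable (a b)

@[simp] lemma c1B_vw (i : Fin n) : c1B n a b s(vB n i, wB n i) = 0 := by simp [c1B, wtB, vB, wB]
@[simp] lemma c2B_vw (i : Fin n) : c2B n a b s(vB n i, wB n i) = b i + 2 := by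
  simp [c2B, wtB, vB, wB]
@[simp] lemma c1B_vp (i : Fin n) : c1B n a b s(vB n i, pB n i) = 0 := by simp [c1B, wtB, vB, pB]
@[simp] lemma c2B_vp (i : Fin n) : c2B n a b s(vB n i, pB n i) = 1 := by simp [c2B, wtB, vB, pB]
@[simp] lemma c1B_pw (i : Fin n) : c1B n a b s(pB n i, wB n i) = a i := by
  simp [c1B, wtB, pB, wB]
@[simp] lemma c2B_pw (i : Fin n) : c2B n a b s(pB n i, wB n i) = 1 := by simp [c2B, wtB, pB, wB]

lemma c1B_wv {i j : Fin n} (h : (j : ℕ) = i + 1) : c1B n a b s(wB n i, vB n j) = 0 := by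
  have : j ≠ i := fun e => by simp [e] at h
  simp [c1B, wtB, vB, wB, h, this]

lemma c2B_wv {i j : Fin n} (h : (j : ℕ) = i + 1) : c2B n a b s(wB n i, vB n j) = 1 := by
  have : j ≠ i := fun e => by simp [e] at h
  simp [c2B, wtB, vB, wB, h, this]

lemma c1B_st (hn : 0 < n) (h2 : 2 ≤ n) :
    c1B n a b s(sB n hn, tB n hn) = ((∑ i, a i : ℕ) : ℤ) + 1 := by
  have : (0 : ℕ) ≠ n - 1 := by omega
  simp [c1B, wtB, sB, tB, this]

lemma c2B_st (hn : 0 < n) (h2 : 2 ≤ n) : c2B n a b s(sB n hn, tB n hn) = 1 := by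
  have : (0 : ℕ) ≠ n - 1 := by omega
  simp [c2B, wtB, sB, tB, this]

lemma c1B_nonneg (e : Sym2 (Vtx n)) : 0 ≤ c1B n a b e := by
  induction e using Sym2.ind with
  | _ u v =>
    have (u v : Vtx n) : 0 ≤ (wtB n a b u v).1 := by
      unfold wtB
      split_ifs <;> dsimp only <;> positivity
    simpa [c1B] using add_nonneg (this u v) (this v u)

lemma c2B_ne_zero {e : Sym2 (Vtx n)} (he : e ∈ (HB n a b).edgeSet) : c2B n a b e ≠ 0 :=
  (edgeSet_fromEdgeSet _ ▸ he).1

lemma Arc.of_wtB_snd_ne_zero {u v : Vtx n} (h : (wtB n a b u v).2 ≠ 0) : Arc n u v := by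
  obtain ⟨i, k⟩ := u
  obtain ⟨j, l⟩ := v
  unfold wtB at h
  split_ifs at h with h₁ h₂ h₃ h₄ h₅
  · obtain ⟨rfl, rfl, rfl⟩ := h₁; exact Arc.vw i
  · obtain ⟨rfl, rfl, rfl⟩ := h₂; exact Arc.vp i
  · obtain ⟨rfl, rfl, rfl⟩ := h₃; exact Arc.pw i
  · obtain ⟨rfl, rfl, hij⟩ := h₄; exact Arc.wv i j hij
  · obtain ⟨rfl, rfl, hi, hj, hij⟩ := h₅
    have hn : 0 < n := i.pos
    obtain rfl : i = ⟨0, hn⟩ := Fin.ext hi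
    obtain rfl : j = ⟨n - 1, Nat.sub_lt hn one_pos⟩ := Fin.ext hj
    exact Arc.st hn (by simp at hij; omega)
  · exact absurd rfl h

variable {a b}

lemma Arc.ne {u v : Vtx n} (h : Arc n u v) : u ≠ v := by
  cases h <;> simp [vB, pB, wB, sB, tB]

lemma Arc.adj {u v : Vtx n} (h : Arc n u v) : (HB n a b).Adj u v := by
  refine (fromEdgeSet_adj _).2 ⟨?_, h.ne⟩
  cases h with
  | vw i => simp [EB]
  | vp i => simp [EB]
  | pw i => simp [EB]
  | wv i j hij => simp [EB, c2B_wv a b hij]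
  | st hn h2 => simp [EB, c2B_st a b hn h2]

lemma Arc.of_adj {u v : Vtx n} (h : (HB n a b).Adj u v) : Arc n u v ∨ Arc n v u := by
  have h2 : (wtB n a b u v).2 + (wtB n a b v u).2 ≠ 0 := ((fromEdgeSet_adj _).1 h).1
  by_cases huv : (wtB n a b u v).2 = 0
  · exact .inr (Arc.of_wtB_snd_ne_zero a b (by omega))
  · exact .inl (Arc.of_wtB_snd_ne_zero a b huv)

lemma forall_adj_of_forall_arc {F : Set (Sym2 (Vtx n))} (hF : F ⊆ (HB n a b).edgeSet)
    {P : Vtx n → Vtx n → Prop} (h : ∀ u v, Arc n u v → s(u, v) ∈ F → P u v ∧ P v u)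
    (u v : Vtx n) (huv : s(u, v) ∈ F) : P u v := by
  rcases Arc.of_adj (hF huv) with harc | harc
  · exact (h u v harc huv).1
  · exact (h v u harc (Sym2.eq_swap ▸ huv)).2

end Arcs

section Costs

variable {n : ℕ} (a b : Fin n → ℕ)

def solOfSpanner (S : Finset (Sym2 (Vtx n))) (i : Fin n) : Bool :=
  decide (s(pB n i, wB n i) ∉ S)

lemma pw_injective : Function.Injective fun i : Fin n => s(pB n i, wB n i) := by
  intro i j h
  simpa [pB, wB] using h

lemma pw_mem_Sx {x : Fin n → Bool} {i : Fin n} (hx : x i = false) :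
    s(pB n i, wB n i) ∈ Sx n a b x := by
  classical
  simp only [Sx, Finset.mem_union, Finset.mem_image, Finset.mem_filter, Finset.mem_univ, true_and]
  exact .inr ⟨i, hx, rfl⟩

lemma f1_Sx (x : Fin n → Bool) :
    f1 (c1B n a b) (Sx n a b x) = ∑ i, if x i then 0 else (a i : ℤ) := by
  classical
  rw [f1, Sx, Finset.sum_union_eq_right fun e he _ => (Finset.mem_filter.1 he).2.2,
    Finset.sum_image pw_injective.injOn, Finset.sum_filter]
  exact Finset.sum_congr rfl fun i _ => by cases x i <;> simp

lemma sum_le_f1 (S : Finset (Sym2 (Vtx n))) :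
    ∑ i, (if solOfSpanner S i then 0 else (a i : ℤ)) ≤ f1 (c1B n a b) S := by
  classical
  have hsub : (Finset.univ.filter fun i => s(pB n i, wB n i) ∈ S).image
      (fun i => s(pB n i, wB n i)) ⊆ S := by
    simp [Finset.image_subset_iff]
  calc ∑ i, (if solOfSpanner S i then 0 else (a i : ℤ))
      = ∑ e ∈ (Finset.univ.filter fun i => s(pB n i, wB n i) ∈ S).image
          (fun i => s(pB n i, wB n i)), c1B n a b e := by
        rw [Finset.sum_image pw_injective.injOn, Finset.sum_filter]
        simp [solOfSpanner]
    _ ≤ f1 (c1B n a b) S :=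
        Finset.sum_le_sum_of_subset_of_nonneg hsub fun e _ _ => c1B_nonneg a b e

/-- The edge `{s, t}` costs more than the whole of `S_x`. -/
lemma st_not_mem_of_f1_le (hn : 0 < n) (h2 : 2 ≤ n) (x : Fin n → Bool)
    {S : Finset (Sym2 (Vtx n))} (hS : f1 (c1B n a b) S ≤ f1 (c1B n a b) (Sx n a b x)) :
    s(sB n hn, tB n hn) ∉ S := by
  intro hmem
  have hst : c1B n a b s(sB n hn, tB n hn) ≤ f1 (c1B n a b) S :=
    Finset.single_le_sum (fun e _ => c1B_nonneg a b e) hmem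
  have hSx : f1 (c1B n a b) (Sx n a b x) ≤ ∑ i, (a i : ℤ) := by
    rw [f1_Sx]
    exact Finset.sum_le_sum fun i _ => by split_ifs <;> simp
  rw [c1B_st a b hn h2] at hst
  push_cast at hst
  omega

end Costs

section Spine

variable {n : ℕ} (b : Fin n → ℕ) (y : Fin n → Bool)

def gadgetLen (i : Fin n) : ℕ := if y i then b i + 2 else 2

def prefixLen (k : ℕ) : ℕ :=
  ∑ j ∈ Finset.range k, if h : j < n then gadgetLen b y ⟨j, h⟩ + 1 else 0

lemma prefixLen_zero : prefixLen b y 0 = 0 := rfl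

lemma prefixLen_succ (i : Fin n) :
    prefixLen b y (i + 1) = prefixLen b y i + gadgetLen b y i + 1 := by
  simp [prefixLen, Finset.sum_range_succ, add_assoc]

lemma prefixLen_self :
    (prefixLen b y n : ℚ) = 3 * n + ∑ i, if y i then (b i : ℚ) else 0 := by
  rw [prefixLen, Finset.sum_range]
  simp only [Fin.is_lt, dif_pos, Fin.eta, gadgetLen]
  push_cast
  have (i : Fin n) :
      ((if y i then (b i : ℚ) + 2 else 2) + 1) = 3 + if y i then (b i : ℚ) else 0 := by
    split_ifs <;> ring
  simp [this, Finset.sum_add_distrib, mul_comm]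

def spinePot (u : Vtx n) : ℕ := prefixLen b y u.1 + ![0, 1, gadgetLen b y u.1] u.2

@[simp] lemma spinePot_vB (i : Fin n) : spinePot b y (vB n i) = prefixLen b y i := by
  simp [spinePot, vB]
@[simp] lemma spinePot_pB (i : Fin n) : spinePot b y (pB n i) = prefixLen b y i + 1 := by
  simp [spinePot, pB]
@[simp] lemma spinePot_wB (i : Fin n) :
    spinePot b y (wB n i) = prefixLen b y i + gadgetLen b y i := by
  simp [spinePot, wB]

end Spine

section LowerBound

variable {n : ℕ} {a b : Fin n → ℕ} {S : Finset (Sym2 (Vtx n))}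

/-- Without the edge `{s, t}`, every `s`–`t` path crosses each gadget `i`, at length cost
`b_i + 2` when `{v_i', w_i}` is missing and `2` otherwise. -/
lemma prefixLen_le_wdist_st (hn : 0 < n) (hS : IsSpanner (HB n a b) ↑S)
    (hst : s(sB n hn, tB n hn) ∉ S) :
    prefixLen b (solOfSpanner S) n ≤ wdist ↑S (c2B n a b) (sB n hn) (tB n hn) + 1 := by
  set y := solOfSpanner S
  have hlip : ∀ u v, s(u, v) ∈ (S : Set (Sym2 (Vtx n))) →
      spinePot b y v ≤ spinePot b y u + c2B n a b s(u, v) := by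
    refine forall_adj_of_forall_arc hS.1 fun u v harc hmem => ?_
    rw [Sym2.eq_swap (a := v)]
    cases harc with
    | vw i =>
      have : gadgetLen b y i ≤ b i + 2 := by unfold gadgetLen; split_ifs <;> omega
      simp only [spinePot_vB, spinePot_wB, c2B_vw]
      omega
    | vp i =>
      simp only [spinePot_vB, spinePot_pB, c2B_vp]
      omega
    | pw i =>
      have : y i = false := by simpa [y, solOfSpanner] using hmem
      simp [gadgetLen, this]
    | wv i j hij =>
      have := prefixLen_succ b y i
      rw [← hij] at this
      simp only [spinePot_vB, spinePot_wB, c2B_wv a b hij]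
      omega
    | st hn h2 => exact absurd hmem hst
  have : Nonempty ((fromEdgeSet (S : Set (Sym2 (Vtx n)))).Walk (sB n hn) (tB n hn)) :=
    hS.2.preconnected _ _
  have hpot := le_add_wdist_of_potential (S : Set (Sym2 (Vtx n))) (c2B n a b) (spinePot b y) hlip
    (u := sB n hn) (v := tB n hn)
  have hs : spinePot b y (sB n hn) = 0 := spinePot_vB b y _
  have ht : spinePot b y (tB n hn) + 1 = prefixLen b y n := by
    have := prefixLen_succ b y ⟨n - 1, Nat.sub_lt hn one_pos⟩
    rw [show n - 1 + 1 = n by omega] at this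
    rw [this, show tB n hn = wB n ⟨n - 1, _⟩ from rfl, spinePot_wB]
  omega

end LowerBound

section StretchBound

variable {n : ℕ} {a b : Fin n → ℕ}

/-- The stretch of `S_y`: attained at `(s, t)` for `n ≥ 2`, and at `(v₁', w₁)` for `n = 1`,
where `H` has no edge `{s, t}`. -/
def stretchBound (n : ℕ) (b : Fin n → ℕ) (y : Fin n → Bool) : ℚ :=
  if n = 1 then 1 + ∑ i, if y i then (b i : ℚ) + 2 else 0
  else 3 * n - 1 + ∑ i, if y i then (b i : ℚ) else 0

lemma stretchBound_of_ne_one (h1 : n ≠ 1) (y : Fin n → Bool) :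
    stretchBound n b y = prefixLen b y n - 1 := by
  rw [stretchBound, if_neg h1, prefixLen_self]
  ring

lemma wdist_edgeSet_eq_one {u v : Vtx n} (harc : Arc n u v) (h1 : c2B n a b s(u, v) = 1) :
    wdist (HB n a b).edgeSet (c2B n a b) u v = 1 :=
  wdist_eq_one_of_adj _ _ (fun _ => c2B_ne_zero a b) (by rw [fromEdgeSet_edgeSet]; exact harc.adj)
    h1

lemma le_wdist_pw_of_eq_one (h1 : n = 1) {S : Finset (Sym2 (Vtx n))} (hS : IsSpanner (HB n a b) ↑S)
    (i : Fin n) :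
    (if solOfSpanner S i then b i + 3 else 1) ≤ wdist ↑S (c2B n a b) (pB n i) (wB n i) := by
  have : Nonempty ((fromEdgeSet (S : Set (Sym2 (Vtx n)))).Walk (pB n i) (wB n i)) :=
    hS.2.preconnected _ _
  by_cases hpw : s(pB n i, wB n i) ∈ S
  · simpa [solOfSpanner, hpw] using
      one_le_wdist _ _ (fun e he => c2B_ne_zero a b (hS.1 he)) (Arc.pw i).ne
  subst h1
  let φ : Vtx 1 → ℕ := fun u => ![1, 0, b i + 3] u.2
  have hlip : ∀ u v, s(u, v) ∈ (S : Set (Sym2 (Vtx 1))) → φ v ≤ φ u + c2B 1 a b s(u, v) := by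
    refine forall_adj_of_forall_arc hS.1 fun u v harc hmem => ?_
    rw [Sym2.eq_swap (a := v)]
    cases harc with
    | vw j =>
      obtain rfl := Subsingleton.elim j i
      rw [c2B_vw]
      simp [φ, vB, wB]
      omega
    | vp j =>
      rw [c2B_vp]
      simp [φ, vB, pB]
    | pw j => exact absurd (Subsingleton.elim j i ▸ hmem) hpw
    | wv j k hjk => omega
    | st _ h2 => omega
  rw [show solOfSpanner S i = true by simpa [solOfSpanner] using hpw, if_pos rfl]
  simpa [φ, pB, wB] using
    le_add_wdist_of_potential _ (c2B 1 a b) φ hlip (u := pB 1 i) (v := wB 1 i)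

lemma stretchBound_le_f2 (hn : 0 < n) {S : Finset (Sym2 (Vtx n))} (hS : IsSpanner (HB n a b) ↑S)
    (hst : 2 ≤ n → s(sB n hn, tB n hn) ∉ S) :
    stretchBound n b (solOfSpanner S) ≤ f2 (HB n a b).edgeSet ↑S (c2B n a b) := by
  by_cases h1 : n = 1
  · subst h1
    have hpw := le_wdist_pw_of_eq_one rfl hS 0
    calc stretchBound 1 b (solOfSpanner S)
        = ((if solOfSpanner S 0 then b 0 + 3 else 1 : ℕ) : ℚ) := by
          rw [stretchBound, if_pos rfl, Fin.sum_univ_one]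
          split_ifs <;> push_cast <;> ring
      _ ≤ wdist ↑S (c2B 1 a b) (pB 1 0) (wB 1 0) := by exact_mod_cast hpw
      _ ≤ _ := wdist_le_f2_of_wdist_eq_one _ _ _ (Arc.pw 0).ne
          (wdist_edgeSet_eq_one (Arc.pw 0) (c2B_pw a b 0))
  · have h2 : 2 ≤ n := by omega
    have hlow := prefixLen_le_wdist_st hn hS (hst h2)
    calc stretchBound n b (solOfSpanner S)
        = prefixLen b (solOfSpanner S) n - 1 := stretchBound_of_ne_one h1 _
      _ ≤ wdist ↑S (c2B n a b) (sB n hn) (tB n hn) := by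
          rw [sub_le_iff_le_add]; exact_mod_cast hlow
      _ ≤ _ := wdist_le_f2_of_wdist_eq_one _ _ _ (Arc.st hn h2).ne
          (wdist_edgeSet_eq_one (Arc.st hn h2) (c2B_st a b hn h2))

end StretchBound

section UpperBound

variable {n : ℕ} {a b : Fin n → ℕ} {x : Fin n → Bool}

lemma Arc.adj_Sx {u v : Vtx n} (h : Arc n u v) (hmem : s(u, v) ∈ Sx n a b x) :
    (fromEdgeSet (Sx n a b x : Set (Sym2 (Vtx n)))).Adj u v :=
  (fromEdgeSet_adj _).2 ⟨hmem, h.ne⟩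

lemma Arc.mem_Sx {u v : Vtx n} (h : Arc n u v) (x : Fin n → Bool) (h0 : c1B n a b s(u, v) = 0) :
    s(u, v) ∈ Sx n a b x := by
  classical
  simp [Sx, h.adj, h0]

variable (a b x)

lemma exists_gadget_walk (i : Fin n) :
    ∃ q : (fromEdgeSet (Sx n a b x : Set (Sym2 (Vtx n)))).Walk (vB n i) (wB n i),
      walkWeight (c2B n a b) q = gadgetLen b x i := by
  cases hxi : x i
  · have hvp := (Arc.vp i).adj_Sx ((Arc.vp i).mem_Sx x (c1B_vp a b i))
    have hpw := (Arc.pw i).adj_Sx (pw_mem_Sx a b hxi)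
    exact ⟨Walk.cons hvp hpw.toWalk, by simp [gadgetLen, hxi]⟩
  · have hvw := (Arc.vw i).adj_Sx ((Arc.vw i).mem_Sx x (c1B_vw a b i))
    exact ⟨hvw.toWalk, by simp [gadgetLen, hxi]⟩

lemma exists_spine_walk (hn : 0 < n) (k : ℕ) (hk : k < n) :
    ∃ q : (fromEdgeSet (Sx n a b x : Set (Sym2 (Vtx n)))).Walk (vB n ⟨0, hn⟩) (wB n ⟨k, hk⟩),
      walkWeight (c2B n a b) q + 1 = prefixLen b x (k + 1) := by
  induction k with
  | zero =>
    obtain ⟨q, hq⟩ := exists_gadget_walk a b x ⟨0, hn⟩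
    exact ⟨q, by simpa [hq, prefixLen_zero] using (prefixLen_succ b x ⟨0, hn⟩).symm⟩
  | succ m ih =>
    obtain ⟨q, hq⟩ := ih (by omega)
    obtain ⟨g, hg⟩ := exists_gadget_walk a b x ⟨m + 1, hk⟩
    have hij : ((⟨m + 1, hk⟩ : Fin n) : ℕ) = (⟨m, by omega⟩ : Fin n) + 1 := rfl
    have harc := Arc.wv _ _ hij
    have hwv := harc.adj_Sx (harc.mem_Sx x (c1B_wv a b hij))
    refine ⟨q.append (Walk.cons hwv g), ?_⟩
    have := prefixLen_succ b x ⟨m + 1, hk⟩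
    simp only [walkWeight_append, walkWeight_cons, c2B_wv a b hij] at this ⊢
    omega

lemma exists_st_walk (hn : 0 < n) :
    ∃ q : (fromEdgeSet (Sx n a b x : Set (Sym2 (Vtx n)))).Walk (sB n hn) (tB n hn),
      walkWeight (c2B n a b) q + 1 = prefixLen b x n := by
  obtain ⟨q, hq⟩ := exists_spine_walk a b x hn (n - 1) (Nat.sub_lt hn one_pos)
  rw [show n - 1 + 1 = n by omega] at hq
  exact ⟨q, hq⟩

lemma one_le_stretchBound (hn : 0 < n) : 1 ≤ stretchBound n b x := by
  have : 0 ≤ ∑ i, if x i then (b i : ℚ) + 2 else 0 :=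
    Finset.sum_nonneg fun i _ => by split_ifs <;> positivity
  have : 0 ≤ ∑ i, if x i then (b i : ℚ) else 0 :=
    Finset.sum_nonneg fun i _ => by split_ifs <;> positivity
  have : (1 : ℚ) ≤ n := by exact_mod_cast hn
  unfold stretchBound
  split_ifs <;> linarith

lemma le_stretchBound {i : Fin n} (hi : x i = true) : (b i : ℚ) + 3 ≤ stretchBound n b x := by
  have h₁ := Finset.single_le_sum (f := fun j => if x j then (b j : ℚ) + 2 else 0)
    (fun j _ => by split_ifs <;> positivity) (Finset.mem_univ i)
  have h₂ := Finset.single_le_sum (f := fun j => if x j then (b j : ℚ) else 0)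
    (fun j _ => by split_ifs <;> positivity) (Finset.mem_univ i)
  have : (1 : ℚ) ≤ n := by exact_mod_cast i.pos
  simp only [hi, if_true] at h₁ h₂
  unfold stretchBound
  split_ifs with h1
  · linarith
  · have : (2 : ℚ) ≤ n := by exact_mod_cast (show 2 ≤ n by have := i.pos; omega)
    linarith

lemma exists_Sx_walk_of_arc {u v : Vtx n} (harc : Arc n u v) :
    ∃ q : (fromEdgeSet (Sx n a b x : Set (Sym2 (Vtx n)))).Walk u v,
      (walkWeight (c2B n a b) q : ℚ) ≤ stretchBound n b x * c2B n a b s(u, v) := by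
  have hK := one_le_stretchBound b x u.1.pos
  have direct {u v : Vtx n} (harc : Arc n u v) (hmem : s(u, v) ∈ Sx n a b x) :
      ∃ q : (fromEdgeSet (Sx n a b x : Set (Sym2 (Vtx n)))).Walk u v,
        (walkWeight (c2B n a b) q : ℚ) ≤ stretchBound n b x * c2B n a b s(u, v) :=
    ⟨(harc.adj_Sx hmem).toWalk, by simpa using le_mul_of_one_le_left (by positivity) hK⟩
  cases harc with
  | vw i => exact direct (Arc.vw i) ((Arc.vw i).mem_Sx x (c1B_vw a b i))
  | vp i => exact direct (Arc.vp i) ((Arc.vp i).mem_Sx x (c1B_vp a b i))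
  | pw i =>
    cases hxi : x i
    · exact direct (Arc.pw i) (pw_mem_Sx a b hxi)
    · -- detour `v_i' → v_i → w_i` of length `b_i + 3`
      have hvp := (Arc.vp i).adj_Sx ((Arc.vp i).mem_Sx x (c1B_vp a b i))
      have hvw := (Arc.vw i).adj_Sx ((Arc.vw i).mem_Sx x (c1B_vw a b i))
      refine ⟨Walk.cons hvp.symm hvw.toWalk, ?_⟩
      have := le_stretchBound b x hxi
      simp only [walkWeight_cons, walkWeight_nil, c2B_vw, c2B_pw,
        Sym2.eq_swap (a := pB n i) (b := vB n i), c2B_vp]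
      push_cast
      linarith
  | wv i j hij => exact direct (Arc.wv i j hij) ((Arc.wv i j hij).mem_Sx x (c1B_wv a b hij))
  | st hn h2 =>
    obtain ⟨q, hq⟩ := exists_st_walk a b x hn
    refine ⟨q, ?_⟩
    have hbound : stretchBound n b x = prefixLen b x n - 1 := stretchBound_of_ne_one (by omega) x
    have : (walkWeight (c2B n a b) q : ℚ) + 1 = prefixLen b x n := by exact_mod_cast hq
    rw [c2B_st a b hn h2, Nat.cast_one, mul_one]
    linarith

lemma f2_Sx_le_stretchBound (hn : 0 < n) :
    f2 (HB n a b).edgeSet ↑(Sx n a b x) (c2B n a b) ≤ stretchBound n b x := by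
  refine f2_le_of_forall_adj _ _ _ _ (by linarith [one_le_stretchBound b x hn]) fun u v huv => ?_
  rw [fromEdgeSet_edgeSet] at huv
  refine forall_adj_of_forall_arc subset_rfl (P := fun u v =>
    ∃ q : (fromEdgeSet (Sx n a b x : Set (Sym2 (Vtx n)))).Walk u v,
      (walkWeight (c2B n a b) q : ℚ) ≤ stretchBound n b x * c2B n a b s(u, v))
    (fun u v harc _ => ?_) u v huv
  obtain ⟨q, hq⟩ := exists_Sx_walk_of_arc a b x harc
  exact ⟨⟨q, hq⟩, q.reverse, by rwa [walkWeight_reverse, Sym2.eq_swap]⟩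

end UpperBound

section Pareto

def valueBound (n : ℕ) (a b : Fin n → ℕ) (y : Fin n → Bool) : ℚ × ℚ :=
  (∑ i, if y i then 0 else (a i : ℚ), stretchBound n b y)

lemma Dominates.of_le_of_le {y' y z' z : ℚ × ℚ} (h : Dominates y' y) (hz' : z' ≤ y')
    (hz : y ≤ z) : Dominates z' z :=
  ⟨hz'.trans (h.1.trans hz), fun heq => h.2 (le_antisymm h.1 (hz.trans (heq ▸ hz')))⟩

lemma dominates_add_right_iff {y' y : ℚ × ℚ} (c : ℚ × ℚ) :
    Dominates (y' + c) (y + c) ↔ Dominates y' y := by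
  simp [Dominates]

lemma not_dominates_valueBound_one {a b : Fin 1 → ℕ} (ha : ∀ i, 0 < a i) (y z : Fin 1 → Bool) :
    ¬ Dominates (valueBound 1 a b y) (valueBound 1 a b z) := by
  rintro ⟨hle, hne⟩
  have := ha 0
  cases hy : y 0 <;> cases hz : z 0 <;>
    simp [valueBound, stretchBound, hy, hz, Prod.le_def] at hle hne
  · linarith
  · linarith

variable {n : ℕ} {a b : Fin n → ℕ}

lemma valueBound_eq_bucoVal_add (h1 : n ≠ 1) (y : Fin n → Bool) :
    valueBound n a b y = bucoVal n a b y + (∑ i, (a i : ℚ), 3 * (n : ℚ) - 1) := by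
  have : ∑ i, (if y i then 0 else (a i : ℚ)) + ∑ i, (if y i then (a i : ℚ) else 0) =
      ∑ i, (a i : ℚ) := by
    rw [← Finset.sum_add_distrib]
    exact Finset.sum_congr rfl fun i _ => by split_ifs <;> simp
  ext
  · simp only [valueBound, bucoVal, Prod.fst_add]
    linarith
  · simp only [valueBound, bucoVal, Prod.snd_add, stretchBound, if_neg h1]
    ring

lemma Dominates.bucoVal_of_valueBound (ha : ∀ i, 0 < a i) {y z : Fin n → Bool}
    (h : Dominates (valueBound n a b y) (valueBound n a b z)) :
    Dominates (bucoVal n a b y) (bucoVal n a b z) := by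
  by_cases h1 : n = 1
  · subst h1
    exact absurd h (not_dominates_valueBound_one ha y z)
  · rwa [valueBound_eq_bucoVal_add h1, valueBound_eq_bucoVal_add h1,
      dominates_add_right_iff] at h

lemma valueBound_le_valueVec (hn : 0 < n) {S : Finset (Sym2 (Vtx n))}
    (hS : IsSpanner (HB n a b) ↑S) (hst : 2 ≤ n → s(sB n hn, tB n hn) ∉ S) :
    valueBound n a b (solOfSpanner S) ≤ valueVec (HB n a b) (c1B n a b) (c2B n a b) S := by
  refine ⟨?_, stretchBound_le_f2 hn hS hst⟩
  simpa [valueBound, valueVec] using (Int.cast_le (R := ℚ)).2 (sum_le_f1 a b S)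

lemma valueVec_Sx_le_valueBound (hn : 0 < n) (x : Fin n → Bool) :
    valueVec (HB n a b) (c1B n a b) (c2B n a b) (Sx n a b x) ≤ valueBound n a b x := by
  refine ⟨?_, f2_Sx_le_stretchBound a b x hn⟩
  simp [valueBound, valueVec, f1_Sx]

end Pareto

theorem Sx_pareto_of_buco_pareto_general (n : ℕ) (a b : Fin n → ℕ)
    (ha : ∀ i, 0 < a i) (x : Fin n → Bool)
    (hx : ¬ ∃ x' : Fin n → Bool, Dominates (bucoVal n a b x') (bucoVal n a b x)) :
    ∀ S : Finset (Sym2 (Vtx n)), IsSpanner (HB n a b) (↑S) →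
      ¬ Dominates (valueVec (HB n a b) (c1B n a b) (c2B n a b) S)
        (valueVec (HB n a b) (c1B n a b) (c2B n a b) (Sx n a b x)) := by
  intro S hS hdom
  have hn : 0 < n := hS.2.nonempty.some.1.pos
  have hst : 2 ≤ n → s(sB n hn, tB n hn) ∉ S := fun h2 =>
    st_not_mem_of_f1_le a b hn h2 x (by simpa [valueVec] using hdom.1.1)
  have hbounds := hdom.of_le_of_le (valueBound_le_valueVec hn hS hst)
    (valueVec_Sx_le_valueBound hn x)
  exact hx ⟨solOfSpanner S, hbounds.bucoVal_of_valueBound ha⟩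

/-- If `x` is a Pareto-optimal solution of the BUCO instance, then `S_x`
is a Pareto-optimal spanner of the associated MSp instance: no spanner of `H` has a value
vector dominating `f(S_x)`. -/
theorem Sx_pareto_of_buco_pareto (n : ℕ) (hn : 0 < n) (a b : Fin n → ℕ)
    (ha : ∀ i, 0 < a i) (hb : ∀ i, 0 < b i) (x : Fin n → Bool)
    (hx : ¬ ∃ x' : Fin n → Bool, Dominates (bucoVal n a b x') (bucoVal n a b x)) :
    ∀ S : Finset (Sym2 (Vtx n)), IsSpanner (HB n a b) (↑S) →
      ¬ Dominates (valueVec (HB n a b) (c1B n a b) (c2B n a b) S)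
        (valueVec (HB n a b) (c1B n a b) (c2B n a b) (Sx n a b x)) :=
  Sx_pareto_of_buco_pareto_general n a b ha x hx

end MSpPaper
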